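/- Assume that for every complex polynomial F of degree n ≥ 2 with F(0) = 0 and F'(0) = 1 there exists a critical point b of F with |F(b)/b| ≥ 1/n (the full Dual Smale conjecture). Then for every odd polynomial P of degree d ≥ 3 with P(0) = 0 and P'(0) = 1 there exists a critical point ζ of P with |P(ζ)/ζ| ≥ 1/√d. -/

import Mathlib

/-!
An odd polynomial with `P'(0) = 1` factors as `P = X · Q(X²)` with `Q(0) = 1`, so that
`P² = H(X²)` for `H = X · Q²`, a polynomial of the same degree `d` normalised as in the Dual Smale
conjecture. Differentiating `P² = H(X²)` gives `P P' = ζ H'(ζ²)`, so for a critical point `b` of `H`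
with `H(b) ≠ 0` any square root `ζ` of `b` is a critical point of `P`, and
`|P(ζ)/ζ|² = |H(b)/b| ≥ 1/d`.
-/

open Polynomial

namespace Polynomial

theorem coeff_comp_neg_X {R : Type*} [CommRing R] (p : R[X]) (n : ℕ) :
    (p.comp (-X)).coeff n = (-1) ^ n * p.coeff n := by
  induction p using Polynomial.induction_on' with
  | add p q hp hq => simp [add_comp, hp, hq, mul_add]
  | monomial k a =>
    rw [monomial_comp, neg_pow, ← C_1, ← C_neg, ← C_pow, ← mul_assoc, ← C_mul,
      coeff_C_mul, coeff_X_pow, coeff_monomial]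
    rcases eq_or_ne k n with rfl | h
    · simp [mul_comm]
    · simp [h, Ne.symm h]

theorem coeff_eq_zero_of_odd {R : Type*} [CommRing R] [IsDomain R] [CharZero R] {p : R[X]}
    (hp : Function.Odd p.eval) {n : ℕ} (hn : Even n) : p.coeff n = 0 := by
  have hcomp : p.comp (-X) = -p := Polynomial.funext fun r ↦ by simp [eval_comp, hp r]
  have h := congrArg (coeff · n) hcomp
  simp only [coeff_comp_neg_X, hn.neg_one_pow, one_mul, coeff_neg] at h
  simpa using CharZero.eq_neg_self_iff.mp h

theorem expand_contract_of_coeff_eq_zero {R : Type*} [CommSemiring R] {p : ℕ} (hp : p ≠ 0)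
    {f : R[X]} (hf : ∀ n, ¬p ∣ n → f.coeff n = 0) : expand R p (contract p f) = f := by
  ext n
  rw [coeff_expand hp.bot_lt, coeff_contract hp]
  split_ifs with h
  · rw [Nat.div_mul_cancel h]
  · exact (hf n h).symm

theorem eq_X_mul_expand_two_of_odd {R : Type*} [CommRing R] [IsDomain R] [CharZero R]
    {p : R[X]} (hp : Function.Odd p.eval) : p = X * expand R 2 (contract 2 p.divX) := by
  have hdivX : ∀ n, ¬2 ∣ n → p.divX.coeff n = 0 := fun n hn ↦ by
    rw [coeff_divX]
    exact coeff_eq_zero_of_odd hp ((Nat.not_even_iff_odd.mp (even_iff_two_dvd.not.mpr hn)).add_one)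
  conv_lhs => rw [← X_mul_divX_add p, coeff_eq_zero_of_odd hp .zero]
  rw [expand_contract_of_coeff_eq_zero two_ne_zero hdivX, C_0, add_zero]

theorem eval_derivative_eq_zero_of_sq_eq_expand {R : Type*} [CommRing R] [NoZeroDivisors R]
    [NeZero (2 : R)] {P H : R[X]} (hPH : P ^ 2 = expand R 2 H) {z : R}
    (hcrit : (derivative H).eval (z ^ 2) = 0) (hz : P.eval z ≠ 0) :
    (derivative P).eval z = 0 := by
  have h := congrArg (eval z ∘ derivative) hPH
  simp only [Function.comp_apply, derivative_sq, derivative_expand, eval_mul, expand_eval,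
    hcrit, zero_mul] at h
  simpa [hz, two_ne_zero] using h

end Polynomial

theorem Real.one_div_sqrt_le_of_one_div_le_sq {x y : ℝ} (hx : 0 ≤ x) (h : 1 / y ≤ x ^ 2) :
    1 / √y ≤ x := by
  rw [one_div, ← Real.sqrt_inv, ← one_div]
  exact (Real.sqrt_le_sqrt h).trans_eq (Real.sqrt_sq hx)

theorem stmt_16_general
    (dualSmale : ∀ (F : Polynomial ℂ) (n : ℕ), 2 ≤ n → F.natDegree = n →
      F.eval 0 = 0 → (Polynomial.derivative F).eval 0 = 1 →
      ∃ b : ℂ, (Polynomial.derivative F).eval b = 0 ∧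
        ‖F.eval b / b‖ ≥ 1 / (n : ℝ))
    (P : Polynomial ℂ) (d : ℕ) (hd : 3 ≤ d)
    (hodd : ∀ z : ℂ, P.eval (-z) = -P.eval z)
    (hdeg : P.natDegree = d)
    (h1 : (Polynomial.derivative P).eval 0 = 1) :
    ∃ ζ : ℂ, (Polynomial.derivative P).eval ζ = 0 ∧
      ‖P.eval ζ / ζ‖ ≥ 1 / Real.sqrt d := by
  set Q := contract 2 P.divX
  set H : ℂ[X] := X * Q ^ 2
  have hPQ : P = X * expand ℂ 2 Q := eq_X_mul_expand_two_of_odd hodd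
  have hPH : P ^ 2 = expand ℂ 2 H := by rw [hPQ]; simp only [H, map_mul, map_pow, expand_X]; ring
  have hHdeg : H.natDegree = d := by
    have := congrArg natDegree hPH
    rw [natDegree_pow, natDegree_expand, hdeg] at this
    omega
  have hH1 : (derivative H).eval 0 = 1 := by
    rw [hPQ] at h1
    simp only [derivative_mul, derivative_X, one_mul, eval_add, eval_mul, eval_X, zero_mul,
      add_zero, expand_eval, zero_pow two_ne_zero] at h1
    simp [H, h1]
  obtain ⟨b, hb, hbound⟩ := dualSmale H d (by omega) hHdeg (by simp [H]) hH1
  obtain ⟨ζ, rfl⟩ := IsAlgClosed.exists_pow_nat_eq b two_pos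
  have hPζ : P.eval ζ ^ 2 = H.eval (ζ ^ 2) := by rw [← eval_pow, hPH, expand_eval]
  have hHb : H.eval (ζ ^ 2) ≠ 0 := by
    rintro h
    rw [h, zero_div, norm_zero] at hbound
    exact (one_div_pos.mpr (by positivity : (0 : ℝ) < d)).not_ge hbound
  refine ⟨ζ, eval_derivative_eq_zero_of_sq_eq_expand hPH hb fun h ↦ hHb ?_, ?_⟩
  · rw [← hPζ, h, zero_pow two_ne_zero]
  · refine Real.one_div_sqrt_le_of_one_div_le_sq (norm_nonneg _) ?_
    rwa [← norm_pow, div_pow, hPζ]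

theorem stmt_16
    (dualSmale : ∀ (F : Polynomial ℂ) (n : ℕ), 2 ≤ n → F.natDegree = n →
      F.eval 0 = 0 → (Polynomial.derivative F).eval 0 = 1 →
      ∃ b : ℂ, (Polynomial.derivative F).eval b = 0 ∧
        ‖F.eval b / b‖ ≥ 1 / (n : ℝ))
    (P : Polynomial ℂ) (d : ℕ) (hd : 3 ≤ d)
    (hodd : ∀ z : ℂ, P.eval (-z) = -P.eval z)
    (hdeg : P.natDegree = d) (h0 : P.eval 0 = 0)
    (h1 : (Polynomial.derivative P).eval 0 = 1) :
    ∃ ζ : ℂ, (Polynomial.derivative P).eval ζ = 0 ∧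
      ‖P.eval ζ / ζ‖ ≥ 1 / Real.sqrt d :=
  stmt_16_general dualSmale P d hd hodd hdeg h1
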